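/- Let 𝕋 be a combinatorial tree forcing with the constant or one-to-one property. Then 𝕋 has the selective disjoint antichain property. -/

import Mathlib

/-- The restriction `x↾n` of a sequence `x ∈ ω^ω` to its first `n` values, as a finite sequence. -/
def seqRestrict (x : ℕ → ℕ) (n : ℕ) : List ℕ := List.ofFn fun i : Fin n => x i

/-- A tree on `ω`: a nonempty set of finite sequences closed under initial segments. -/
def IsSeqTree (T : Set (List ℕ)) : Prop :=
  T.Nonempty ∧ ∀ s ∈ T, ∀ t : List ℕ, t <+: s → t ∈ T

/-- `[T]`, the set of branches of a tree `T ⊆ ω^{<ω}`. -/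
def branches (T : Set (List ℕ)) : Set (ℕ → ℕ) := {x | ∀ n : ℕ, seqRestrict x n ∈ T}

/-- `S` and `T` are compatible in `𝕋` (ordered by inclusion) if they have a common extension. -/
def Compat (𝕋 : Set (Set (List ℕ))) (S T : Set (List ℕ)) : Prop :=
  ∃ R ∈ 𝕋, R ⊆ S ∧ R ⊆ T

/-- A combinatorial tree forcing: a collection `𝕋` of trees on `ω` containing the full tree,
closed under restrictions `T_s`, with large disjoint antichains, and homogeneous. -/
structure CombTreeForcing (𝕋 : Set (Set (List ℕ))) : Prop where
  /-- every member of `𝕋` is a tree -/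
  isTree : ∀ T ∈ 𝕋, IsSeqTree T
  /-- (1) `ω^{<ω} ∈ 𝕋` -/
  univ_mem : (Set.univ : Set (List ℕ)) ∈ 𝕋
  /-- (2) closure under subtrees `T_s` -/
  restrict_mem : ∀ T ∈ 𝕋, ∀ s ∈ T, {t ∈ T | s <+: t ∨ t <+: s} ∈ 𝕋
  /-- (3) large disjoint antichains: a continuous `f : ω^ω → 2^ω` all of whose fibers are
  branch sets of trees in `𝕋` -/
  large_disjoint : ∃ f : (ℕ → ℕ) → (ℕ → Bool), Continuous f ∧
      ∀ x : ℕ → Bool, ∃ T ∈ 𝕋, f ⁻¹' {x} = branches T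
  /-- (4) homogeneity: below every `T ∈ 𝕋` there is an order-preserving injective copy
  `i : ω^{<ω} → T` of the full tree inducing a homeomorphism `g : ω^ω → [T]`,
  `g(x) = ⋃_n i(x↾n)`, such that `S ∈ 𝕋` iff the downward closure of `i''S` is in `𝕋`. -/
  homogeneity : ∀ T ∈ 𝕋, ∃ i : List ℕ → List ℕ,
      Function.Injective i ∧ (∀ s t : List ℕ, s <+: t → i s <+: i t) ∧
      (∀ s : List ℕ, i s ∈ T) ∧
      ∃ g : (ℕ → ℕ) → (ℕ → ℕ),
        (∀ (x : ℕ → ℕ) (n : ℕ),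
          i (seqRestrict x n) = seqRestrict (g x) (i (seqRestrict x n)).length) ∧
        Topology.IsEmbedding g ∧ Set.range g = branches T ∧
        ∀ S : Set (List ℕ), IsSeqTree S → (S ∈ 𝕋 ↔ {t | ∃ s ∈ S, t <+: i s} ∈ 𝕋)

/-- `𝕋` has the selective disjoint antichain property: there is an antichain `(T_α : α < 𝔠)`
with pairwise disjoint branch sets such that below every `T ∈ 𝕋` there is `S ∈ 𝕋` which
either lies below some `T_α`, or satisfies `|[S] ∩ [T_α]| ≤ 1` for all `α`. -/
def SelectiveDisjointAntichainProp (𝕋 : Set (Set (List ℕ))) : Prop :=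
  ∃ (ι : Type) (Tfam : ι → Set (List ℕ)),
    Cardinal.mk ι = Cardinal.continuum ∧
    (∀ a : ι, Tfam a ∈ 𝕋) ∧
    (∀ a b : ι, a ≠ b → ¬ Compat 𝕋 (Tfam a) (Tfam b)) ∧
    (∀ a b : ι, a ≠ b → branches (Tfam a) ∩ branches (Tfam b) = ∅) ∧
    ∀ T ∈ 𝕋, ∃ S ∈ 𝕋, S ⊆ T ∧
      ((∃ a : ι, S ⊆ Tfam a) ∨ ∀ a : ι, (branches S ∩ branches (Tfam a)).Subsingleton)

/-- `𝕋` has the constant or one-to-one property: for every `T ∈ 𝕋` and every continuous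
`f : [T] → 2^ω` there is `S ≤ T` in `𝕋` on which `f` is constant or injective. -/
def ConstantOrOneToOneProp (𝕋 : Set (Set (List ℕ))) : Prop :=
  ∀ T ∈ 𝕋, ∀ f : (ℕ → ℕ) → (ℕ → Bool), ContinuousOn f (branches T) →
    ∃ S ∈ 𝕋, S ⊆ T ∧
      ((∃ y : ℕ → Bool, ∀ x ∈ branches S, f x = y) ∨ Set.InjOn f (branches S))

/-!
Let `f : ω^ω → 2^ω` be the continuous map of the large-disjoint-antichain axiom and let
`T_y ∈ 𝕋` be the tree with `[T_y] = f⁻¹{y}`. The `T_y` have pairwise disjoint branch sets, and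
members of `𝕋` with disjoint branch sets are incompatible because every member of `𝕋` has a
branch. Given `T ∈ 𝕋`, shrink it to `S` on which `f` is constant or injective. If `f` is
injective on `[S]`, each fiber `[T_y]` meets `[S]` in at most one point. If `f ≡ y` on `[S]`,
then `[S] ⊆ [T_y]`; this need not give `S ≤ T_y`, since `S` may have nodes on no branch, but
the homogeneous copy of `ω^{<ω}` inside `S` is an `R ≤ S` in `𝕋` all of whose nodes lie on
branches of `S`, hence `R ≤ T_y`.
-/

theorem branches_mono {S T : Set (List ℕ)} (h : S ⊆ T) : branches S ⊆ branches T :=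
  fun _ hx n => h (hx n)

theorem seqRestrict_length_of_prefix {t : List ℕ} {x : ℕ → ℕ} {n : ℕ}
    (h : t <+: seqRestrict x n) : seqRestrict x t.length = t := by
  apply List.ext_getElem (by simp [seqRestrict])
  intro k _ hk
  rw [h.getElem hk]
  simp [seqRestrict]

theorem seqRestrict_getD_length (s : List ℕ) :
    seqRestrict (fun n => s.getD n 0) s.length = s := by
  apply List.ext_getElem (by simp [seqRestrict])
  intro n _ _
  simp [seqRestrict]

namespace CombTreeForcing

variable {𝕋 : Set (Set (List ℕ))}

theorem branches_nonempty (h𝕋 : CombTreeForcing 𝕋) {T : Set (List ℕ)} (hT : T ∈ 𝕋) :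
    (branches T).Nonempty := by
  obtain ⟨-, -, -, -, g, -, -, hrange, -⟩ := h𝕋.homogeneity T hT
  exact hrange ▸ Set.range_nonempty g

theorem not_compat_of_disjoint_branches (h𝕋 : CombTreeForcing 𝕋) {S T : Set (List ℕ)}
    (hST : Disjoint (branches S) (branches T)) : ¬ Compat 𝕋 S T := by
  rintro ⟨R, hR, hRS, hRT⟩
  obtain ⟨x, hx⟩ := h𝕋.branches_nonempty hR
  exact hST.ne_of_mem (branches_mono hRS hx) (branches_mono hRT hx) rfl

theorem exists_subset_forall_mem_seqRestrict (h𝕋 : CombTreeForcing 𝕋) {S : Set (List ℕ)}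
    (hS : S ∈ 𝕋) :
    ∃ R ∈ 𝕋, R ⊆ S ∧ ∀ t ∈ R, ∃ x ∈ branches S, seqRestrict x t.length = t := by
  obtain ⟨i, -, -, hi_mem, g, hg, -, hrange, hiff⟩ := h𝕋.homogeneity S hS
  have hR : {t | ∃ s ∈ (Set.univ : Set (List ℕ)), t <+: i s} ∈ 𝕋 :=
    (hiff Set.univ ⟨⟨[], trivial⟩, fun _ _ _ _ => trivial⟩).1 h𝕋.univ_mem
  refine ⟨_, hR, fun t ⟨s, _, hts⟩ => (h𝕋.isTree S hS).2 (i s) (hi_mem s) t hts, ?_⟩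
  rintro t ⟨s, -, hts⟩
  have hgs := hg (fun n => s.getD n 0) s.length
  rw [seqRestrict_getD_length] at hgs
  exact ⟨g _, hrange ▸ Set.mem_range_self _, seqRestrict_length_of_prefix (hgs ▸ hts)⟩

theorem exists_subset_of_branches_subset (h𝕋 : CombTreeForcing 𝕋) {S T : Set (List ℕ)}
    (hS : S ∈ 𝕋) (hST : branches S ⊆ branches T) : ∃ R ∈ 𝕋, R ⊆ S ∧ R ⊆ T := by
  obtain ⟨R, hR, hRS, hRbr⟩ := h𝕋.exists_subset_forall_mem_seqRestrict hS
  refine ⟨R, hR, hRS, fun t ht => ?_⟩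
  obtain ⟨x, hx, hxt⟩ := hRbr t ht
  exact hxt ▸ hST hx _

end CombTreeForcing

/-- A combinatorial tree forcing with the constant or one-to-one property has the selective
disjoint antichain property. -/
theorem selectiveDisjointAntichain_of_constantOrOneToOne (𝕋 : Set (Set (List ℕ)))
    (hctf : CombTreeForcing 𝕋) (hc11 : ConstantOrOneToOneProp 𝕋) :
    SelectiveDisjointAntichainProp 𝕋 := by
  obtain ⟨f, hf, hfib⟩ := hctf.large_disjoint
  choose Tfam hTmem hTfib using hfib
  have hdisj : ∀ a b, a ≠ b → Disjoint (branches (Tfam a)) (branches (Tfam b)) := by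
    intro a b hab
    rw [← hTfib, ← hTfib]
    exact (Set.disjoint_singleton.2 hab).preimage f
  refine ⟨ℕ → Bool, Tfam, by simp, hTmem,
    fun a b hab => hctf.not_compat_of_disjoint_branches (hdisj a b hab),
    fun a b hab => (hdisj a b hab).inter_eq, fun T hT => ?_⟩
  obtain ⟨S, hS, hST, ⟨y, hy⟩ | hinj⟩ := hc11 T hT f hf.continuousOn
  · have hSy : branches S ⊆ branches (Tfam y) := fun x hx => hTfib y ▸ hy x hx
    obtain ⟨R, hR, hRS, hRy⟩ := hctf.exists_subset_of_branches_subset hS hSy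
    exact ⟨R, hR, hRS.trans hST, Or.inl ⟨y, hRy⟩⟩
  · refine ⟨S, hS, hST, Or.inr fun a u ⟨huS, hua⟩ v ⟨hvS, hva⟩ => hinj huS hvS ?_⟩
    rw [← hTfib a] at hua hva
    exact hua.trans hva.symm
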